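/- Let n ≥ 2 and view 𝒢_n as a simple graph. Then every vertex u_i^{(1)} and u_i^{(2)} (1 ≤ i ≤ n) is a regular vertex of 𝒢_n, while the vertex w is not a regular vertex of 𝒢_n. -/

import Mathlib

/-- The graph `𝒢ₙ` on the vertex set `{w} ∪ {uᵢ⁽¹⁾, uᵢ⁽²⁾ : 1 ≤ i ≤ n}`
(identified with `Option (Fin n × Fin 2)`, `none = w`, `some (i,0) = uᵢ⁽¹⁾`,
`some (i,1) = uᵢ⁽²⁾`), with edges `xᵢ = {w, uᵢ⁽¹⁾}`, `yᵢ = {w, uᵢ⁽²⁾}`,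
`zᵢ = {uᵢ⁽¹⁾, uᵢ⁽²⁾}`. -/
def Gn (n : ℕ) : SimpleGraph (Option (Fin n × Fin 2)) :=
  SimpleGraph.fromRel (fun a b => ∃ i : Fin n,
    (a = none ∧ ∃ t : Fin 2, b = some (i, t)) ∨ (a = some (i, 0) ∧ b = some (i, 1)))

/-- Every connected component of `G` contains an odd cycle (equivalently, is not
bipartite): every vertex can reach a vertex carrying an odd cycle. -/
def EveryComponentHasOddCycle {V : Type*} (G : SimpleGraph V) : Prop :=
  ∀ v : V, ∃ (u : V) (c : G.Walk u u), G.Reachable v u ∧ c.IsCycle ∧ Odd c.length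

/-- A vertex `v` of `G` is regular if every connected component of the induced
subgraph `G \ v` contains an odd cycle. -/
def IsRegularVertex {V : Type*} (G : SimpleGraph V) (v : V) : Prop :=
  EveryComponentHasOddCycle (G.induce {x | x ≠ v})

lemma gn_adj_none {n : ℕ} (q : Fin n × Fin 2) : (Gn n).Adj none (some q) := by
  simp [Gn, SimpleGraph.fromRel_adj]
  obtain ⟨i, t⟩ := q
  fin_cases t <;> simp

lemma gn_adj_z {n : ℕ} (i : Fin n) : (Gn n).Adj (some (i,0)) (some (i,1)) := by
  simp [Gn, SimpleGraph.fromRel_adj]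

lemma gn_adj_some {n : ℕ} {p q : Fin n × Fin 2} (h : (Gn n).Adj (some p) (some q)) :
    p.1 = q.1 ∧ p.2 ≠ q.2 := by
  simp only [Gn, SimpleGraph.fromRel_adj] at h
  obtain ⟨hne, ⟨i, h⟩ | ⟨i, h⟩⟩ := h <;>
    rcases h with ⟨h1, h2⟩ | ⟨h1, h2⟩ <;> simp_all

lemma induce_adj_iff {n : ℕ} (S : Set (Option (Fin n × Fin 2))) (u v : S) :
    ((Gn n).induce S).Adj u v ↔ (Gn n).Adj u.val v.val := Iff.rfl

theorem part1 (n : ℕ) (hn : 2 ≤ n) (p : Fin n × Fin 2) :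
    IsRegularVertex (Gn n) (some p) := by
  intro v
  -- choose j ≠ p.1
  have hn0 : (0 : ℕ) < n := by omega
  have hn1 : (1 : ℕ) < n := by omega
  set j : Fin n := if p.1 = ⟨0, hn0⟩ then ⟨1, hn1⟩ else ⟨0, hn0⟩ with hj
  have hjne : j ≠ p.1 := by
    rcases eq_or_ne p.1 ⟨0, hn0⟩ with h | h
    · simp only [hj, if_pos h, h]
      intro he; exact absurd (congrArg Fin.val he) (by simp)
    · simp only [hj, if_neg h]
      exact fun he => h he.symm
  have hw : (none : Option (Fin n × Fin 2)) ∈ {x | x ≠ some p} := by simp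
  have ha : (some (j, 0) : Option (Fin n × Fin 2)) ∈ {x | x ≠ some p} := by
    simp only [Set.mem_setOf_eq, ne_eq, Option.some_inj]
    intro he; exact hjne (by rw [← he])
  have hb : (some (j, 1) : Option (Fin n × Fin 2)) ∈ {x | x ≠ some p} := by
    simp only [Set.mem_setOf_eq, ne_eq, Option.some_inj]
    intro he; exact hjne (by rw [← he])
  set G' := (Gn n).induce {x | x ≠ some p} with hG'
  let w' : {x | x ≠ some p} := ⟨none, hw⟩
  let a : {x | x ≠ some p} := ⟨some (j, 0), ha⟩
  let b : {x | x ≠ some p} := ⟨some (j, 1), hb⟩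
  have h1 : G'.Adj w' a := gn_adj_none (j, 0)
  have h2 : G'.Adj a b := gn_adj_z j
  have h3 : G'.Adj b w' := (gn_adj_none (j, 1)).symm
  let c : G'.Walk w' w' := .cons h1 (.cons h2 (.cons h3 .nil))
  have hwa : w' ≠ a := by simp [w', a]
  have hwb : w' ≠ b := by simp [w', b]
  have hab : a ≠ b := by simp [a, b]
  refine ⟨w', c, ?_, ?_, ?_⟩
  · -- reachability
    obtain ⟨x, hx⟩ := v
    match x with
    | none => exact SimpleGraph.Reachable.refl _
    | some q =>
      have : G'.Adj ⟨some q, hx⟩ w' := (gn_adj_none q).symm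
      exact this.reachable
  · rw [SimpleGraph.Walk.isCycle_def, SimpleGraph.Walk.isTrail_def]
    refine ⟨?_, by simp [c], ?_⟩
    · simp [c, SimpleGraph.Walk.edges, hwa, hwb, hab, Sym2.eq_iff]
      tauto
    · simp [c, hwa, hwb, hab, hwa.symm, hab.symm, hwb.symm]
  · show Odd 3; decide

theorem part2 (n : ℕ) (hn : 2 ≤ n) : ¬ IsRegularVertex (Gn n) none := by
  set S : Set (Option (Fin n × Fin 2)) := {x | x ≠ none} with hS
  set G' := (Gn n).induce S with hG'
  -- unique neighbor
  have huniq : ∀ a b c : S, G'.Adj a b → G'.Adj a c → b = c := by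
    rintro ⟨xa, hxa⟩ ⟨xb, hxb⟩ ⟨xc, hxc⟩ hab hac
    match xa, xb, xc with
    | some pa, some pb, some pc =>
      have h1 := gn_adj_some (hab : (Gn n).Adj (some pa) (some pb))
      have h2 := gn_adj_some (hac : (Gn n).Adj (some pa) (some pc))
      obtain ⟨h1a, h1b⟩ := h1
      obtain ⟨h2a, h2b⟩ := h2
      have e1 : pb.1 = pc.1 := h1a ▸ h2a
      have e2 : pb.2 = pc.2 := by
        have b1 := pa.2.isLt; have b2 := pb.2.isLt; have b3 := pc.2.isLt
        have n1 : pa.2.val ≠ pb.2.val := fun h => h1b (Fin.ext h)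
        have n2 : pa.2.val ≠ pc.2.val := fun h => h2b (Fin.ext h)
        exact Fin.ext (by omega)
      simp [Prod.ext e1 e2]
  have nocycle : ∀ (u : S) (c : G'.Walk u u), ¬ c.IsCycle := by
    intro u c hc
    have h3 := hc.three_le_length
    match c, hc, h3 with
    | .cons h1 (.cons h2 rest), hc, h3 =>
      rename_i a b
      have hbu : b = u := huniq a b u h2 h1.symm
      subst hbu
      match rest, hc, h3 with
      | .nil, hc, h3 => simp at h3
      | .cons h4 r, hc, h3 =>
        rename_i d
        rw [SimpleGraph.Walk.isCycle_def] at hc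
        have hnd := hc.2.2
        simp [SimpleGraph.Walk.support_cons, SimpleGraph.Walk.end_mem_support] at hnd
  intro hreg
  have h0 : (0 : ℕ) < n := by omega
  have hv : (some ((⟨0, h0⟩ : Fin n), (0 : Fin 2))) ∈ S := by simp [hS]
  obtain ⟨u, c, _, hc, _⟩ := hreg ⟨_, hv⟩
  exact nocycle u c hc

/-- Every `uᵢ⁽¹⁾` and `uᵢ⁽²⁾` is a regular vertex of `𝒢ₙ`, while `w` is not. -/
theorem stmt_13 (n : ℕ) (hn : 2 ≤ n) :
    (∀ p : Fin n × Fin 2, IsRegularVertex (Gn n) (some p)) ∧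
      ¬ IsRegularVertex (Gn n) none := by
  exact ⟨fun p => part1 n hn p, part2 n hn⟩
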